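/- arXiv:2007.12924 — 3 statements merged into one kernel-verified Lean document; each statement's English description precedes it below -/
import Mathlib

section
/- Let (μ_k) be a sequence of non-negative finite Borel measures on ℝⁿ with finite first moments, and μ such a measure. If the family (μ_k) is uniformly integrable and μ_k converges weakly to μ, then the zonoids Z(μ_k) converge to Z(μ) in the Hausdorff metric. -/
open MeasureTheory Pointwise Filter Topology

/-- The zonoid of a Borel measure on `ℝⁿ`. -/
noncomputable def zonoid {n : ℕ} (μ : Measure (EuclideanSpace ℝ (Fin n))) :
    Set (EuclideanSpace ℝ (Fin n)) :=
  {z | ∃ φ : EuclideanSpace ℝ (Fin n) → ℝ, Measurable φ ∧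
    (∀ x, φ x ∈ Set.Icc (0 : ℝ) 1) ∧ z = ∫ x, φ x • x ∂μ}

/-!
The support function of `zonoid μ` in direction `u` is `∫ max ⟪u, x⟫ 0 ∂μ`, attained by the
indicator of the half-space `0 < ⟪u, x⟫`, and the Hausdorff distance of two convex sets is
at most the uniform distance of their support functions on the unit sphere. Uniform integrability
makes the error of truncating `max ⟪u, x⟫ 0` at height `B` small uniformly in `k`, so weak
convergence gives pointwise convergence of the support functions. They are Lipschitz with constant
the first moment, which converges by the same argument applied to `‖x‖` and so stays bounded;
this equicontinuity upgrades pointwise to uniform convergence on the compact sphere.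
-/

open scoped InnerProductSpace NNReal

section WeakConvergence

variable {E : Type*} [NormedAddCommGroup E] [MeasurableSpace E] [OpensMeasurableSpace E]

lemma tendsto_setIntegral_norm_ge_atTop {μ : Measure E} (hμ : Integrable (‖·‖) μ) :
    Tendsto (fun β : ℝ => ∫ x in {x | β ≤ ‖x‖}, ‖x‖ ∂μ) atTop (𝓝 0) := by
  have hempty : ⋂ β : ℝ, {x : E | β ≤ ‖x‖} = ∅ :=
    Set.iInter_eq_empty_iff.2 fun x => ⟨‖x‖ + 1, by simp⟩
  simpa [hempty] using tendsto_setIntegral_of_antitone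
    (fun β => measurableSet_le measurable_const measurable_norm)
    (fun β β' h x (hx : β' ≤ ‖x‖) => h.trans hx) ⟨0, hμ.integrableOn⟩

lemma dist_integral_integral_min_le {μ : Measure E} (hμ : Integrable (‖·‖) μ) {g : E → ℝ}
    (hg : AEStronglyMeasurable g μ) (hg0 : ∀ x, 0 ≤ g x) (hg_le : ∀ x, g x ≤ ‖x‖)
    {B : ℝ} (hB : 0 ≤ B) :
    dist (∫ x, g x ∂μ) (∫ x, min (g x) B ∂μ) ≤ ∫ x in {x | B ≤ ‖x‖}, ‖x‖ ∂μ := by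
  have hS : MeasurableSet {x : E | B ≤ ‖x‖} := measurableSet_le measurable_const measurable_norm
  have hgi : Integrable g μ :=
    hμ.mono' hg (ae_of_all _ fun x => by rw [Real.norm_of_nonneg (hg0 x)]; exact hg_le x)
  have hgBi : Integrable (fun x => min (g x) B) μ :=
    hgi.mono' (hg.inf aestronglyMeasurable_const) (ae_of_all _ fun x => by
      rw [Real.norm_of_nonneg (le_min (hg0 x) hB)]; exact min_le_left _ _)
  rw [Real.dist_eq, abs_of_nonneg (sub_nonneg.2 (integral_mono hgBi hgi fun x => min_le_left _ _)),
    ← integral_sub hgi hgBi, ← integral_indicator hS]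
  refine integral_mono (hgi.sub hgBi) (hμ.indicator hS) fun x => ?_
  rcases le_or_gt (g x) B with hgB | hBg
  · rw [min_eq_left hgB, sub_self]
    exact Set.indicator_nonneg (fun y _ => norm_nonneg y) x
  · have hx : x ∈ {x : E | B ≤ ‖x‖} := hBg.le.trans (hg_le x)
    rw [min_eq_right hBg.le, Set.indicator_of_mem hx]
    linarith [hg_le x]

lemma tendsto_integral_of_weakConvergence_of_uniformIntegrable {μk : ℕ → Measure E}
    {μ : Measure E} (hμk : ∀ k, Integrable (‖·‖) (μk k)) (hμ : Integrable (‖·‖) μ)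
    (hui : ∀ ε > (0 : ℝ), ∃ β : ℝ, ∀ k, ∫ x in {x : E | β ≤ ‖x‖}, ‖x‖ ∂(μk k) < ε)
    (hweak : ∀ f : BoundedContinuousFunction E ℝ,
      Tendsto (fun k => ∫ x, f x ∂(μk k)) atTop (𝓝 (∫ x, f x ∂μ)))
    {g : E → ℝ} (hg : Continuous g) (hg0 : ∀ x, 0 ≤ g x) (hg_le : ∀ x, g x ≤ ‖x‖) :
    Tendsto (fun k => ∫ x, g x ∂(μk k)) atTop (𝓝 (∫ x, g x ∂μ)) := by
  refine Metric.tendsto_atTop.2 fun ε hε => ?_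
  obtain ⟨β, hβ⟩ := hui (ε / 3) (by positivity)
  obtain ⟨B, hβB, hB, hμB⟩ : ∃ B, β ≤ B ∧ 0 ≤ B ∧ ∫ x in {x | B ≤ ‖x‖}, ‖x‖ ∂μ < ε / 3 :=
    ((eventually_ge_atTop β).and ((eventually_ge_atTop 0).and
      ((tendsto_setIntegral_norm_ge_atTop hμ).eventually (gt_mem_nhds (by positivity))))).exists
  have hμkB : ∀ k, ∫ x in {x | B ≤ ‖x‖}, ‖x‖ ∂(μk k) < ε / 3 := fun k =>
    (setIntegral_mono_set (hμk k).integrableOn (ae_of_all _ fun x => norm_nonneg x)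
      (Eventually.of_forall fun x (hx : B ≤ ‖x‖) => hβB.trans hx)).trans_lt (hβ k)
  let gB : BoundedContinuousFunction E ℝ :=
    .mkOfBound ⟨fun x => min (g x) B, by fun_prop⟩ B fun x y => by
      simpa using Real.dist_le_of_mem_Icc (x' := 0) (y' := B)
        ⟨le_min (hg0 x) hB, min_le_right _ _⟩ ⟨le_min (hg0 y) hB, min_le_right _ _⟩
  obtain ⟨N, hN⟩ := Metric.tendsto_atTop.1 (hweak gB) (ε / 3) (by positivity)
  refine ⟨N, fun k hk => ?_⟩
  calc dist (∫ x, g x ∂(μk k)) (∫ x, g x ∂μ)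
      ≤ dist (∫ x, g x ∂(μk k)) (∫ x, gB x ∂(μk k)) + dist (∫ x, gB x ∂(μk k)) (∫ x, gB x ∂μ)
        + dist (∫ x, gB x ∂μ) (∫ x, g x ∂μ) := dist_triangle4 _ _ _ _
    _ < ε / 3 + ε / 3 + ε / 3 := by
      gcongr
      · exact (dist_integral_integral_min_le (hμk k) hg.aestronglyMeasurable hg0 hg_le hB).trans_lt
          (hμkB k)
      · exact hN k hk
      · rw [dist_comm]
        exact (dist_integral_integral_min_le hμ hg.aestronglyMeasurable hg0 hg_le hB).trans_lt hμB
    _ = ε := by ring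

end WeakConvergence

lemma tendstoUniformlyOn_of_lipschitzWith {ι α β : Type*} [PseudoMetricSpace α]
    [PseudoMetricSpace β] {F : ι → α → β} {f : α → β} {l : Filter ι} {s : Set α} {K : ℝ≥0}
    (hs : IsCompact s) (hF : ∀ i, LipschitzWith K (F i))
    (h : ∀ x ∈ s, Tendsto (F · x) l (𝓝 (f x))) :
    TendstoUniformlyOn F f l s := by
  have : CompactSpace s := isCompact_iff_compactSpace.mp hs
  have hequi : Equicontinuous fun i (x : s) => F i x :=
    (LipschitzWith.uniformEquicontinuous _ K fun i =>
      ((hF i).lipschitzOnWith (s := s)).to_restrict).equicontinuous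
  rw [tendstoUniformlyOn_iff_tendstoUniformly_comp_coe]
  exact UniformFun.tendsto_iff_tendstoUniformly.1
    ((hequi.tendsto_uniformFun_iff_pi l _).2 (tendsto_pi_nhds.2 fun x => h x x.2))

section InnerProductSpace

variable {E : Type*} [NormedAddCommGroup E] [InnerProductSpace ℝ E] [CompleteSpace E]

lemma infDist_le_of_forall_inner_le {s : Set E} (hs : Convex ℝ s) (hne : s.Nonempty) {z : E}
    {r : ℝ} (hr : 0 ≤ r) (H : ∀ u : E, ‖u‖ = 1 → ∃ y ∈ s, ⟪u, z⟫_ℝ ≤ ⟪u, y⟫_ℝ + r) :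
    Metric.infDist z s ≤ r := by
  obtain ⟨p, hp, hp_min⟩ := exists_norm_eq_iInf_of_complete_convex hne.closure
    isClosed_closure.isComplete hs.closure z
  have hp_proj : ∀ w ∈ closure s, ⟪z - p, w - p⟫_ℝ ≤ 0 :=
    (norm_eq_iInf_iff_real_inner_le_zero hs.closure hp).1 hp_min
  have hdist : Metric.infDist z s ≤ ‖z - p‖ := by
    rw [← Metric.infDist_closure, ← dist_eq_norm]
    exact Metric.infDist_le_dist_of_mem hp
  rcases eq_or_ne z p with rfl | hzp
  · exact hdist.trans (by simpa using hr)
  -- the unit normal `u` at the projection `p` separates `z` from `s` by exactly `‖z - p‖`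
  have hd : 0 < ‖z - p‖ := norm_pos_iff.2 (sub_ne_zero.2 hzp)
  set u := ‖z - p‖⁻¹ • (z - p)
  have hu : ‖u‖ = 1 := by rw [norm_smul, norm_inv, norm_norm, inv_mul_cancel₀ hd.ne']
  obtain ⟨y, hy, hyz⟩ := H u hu
  have hzp_eq : ⟪u, z - p⟫_ℝ = ‖z - p‖ := by
    rw [real_inner_smul_left, real_inner_self_eq_norm_sq]
    field_simp
  have hyp : ⟪u, y - p⟫_ℝ ≤ 0 := by
    rw [real_inner_smul_left]
    exact mul_nonpos_of_nonneg_of_nonpos (by positivity) (hp_proj y (subset_closure hy))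
  rw [inner_sub_right] at hzp_eq hyp
  linarith

lemma hausdorffDist_le_of_isGreatest_inner {s t : Set E} (hs : Convex ℝ s) (ht : Convex ℝ t)
    {h k : E → ℝ} (hh : ∀ u, IsGreatest ((⟪u, ·⟫_ℝ) '' s) (h u))
    (hk : ∀ u, IsGreatest ((⟪u, ·⟫_ℝ) '' t) (k u)) {r : ℝ} (hr : 0 ≤ r)
    (hhk : ∀ u, ‖u‖ = 1 → dist (h u) (k u) ≤ r) :
    Metric.hausdorffDist s t ≤ r := by
  refine Metric.hausdorffDist_le_of_infDist hr (fun z hz => ?_) (fun z hz => ?_)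
  · refine infDist_le_of_forall_inner_le ht (Set.image_nonempty.1 ⟨_, (hk 0).1⟩) hr fun u hu => ?_
    obtain ⟨y, hy, hyk⟩ := (hk u).1
    refine ⟨y, hy, ?_⟩
    linarith [(hh u).2 ⟨z, hz, rfl⟩, (abs_sub_le_iff.1 (hhk u hu)).1]
  · refine infDist_le_of_forall_inner_le hs (Set.image_nonempty.1 ⟨_, (hh 0).1⟩) hr fun u hu => ?_
    obtain ⟨y, hy, hyh⟩ := (hh u).1
    refine ⟨y, hy, ?_⟩
    linarith [(hk u).2 ⟨z, hz, rfl⟩, (abs_sub_le_iff.1 (hhk u hu)).2]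

end InnerProductSpace

section Zonoid

variable {n : ℕ} {μ : Measure (EuclideanSpace ℝ (Fin n))}

noncomputable def zonoidSupport (μ : Measure (EuclideanSpace ℝ (Fin n)))
    (u : EuclideanSpace ℝ (Fin n)) : ℝ :=
  ∫ x, max ⟪u, x⟫_ℝ 0 ∂μ

lemma integrable_max_inner_zero (hμ : Integrable (fun x => x) μ) (u : EuclideanSpace ℝ (Fin n)) :
    Integrable (fun x => max ⟪u, x⟫_ℝ 0) μ :=
  (hμ.norm.const_mul ‖u‖).mono' (by fun_prop) (ae_of_all _ fun x => by
    rw [Real.norm_of_nonneg (le_max_right _ _)]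
    exact max_le (real_inner_le_norm u x) (by positivity))

lemma integrable_smul_self (hμ : Integrable (fun x => x) μ) {φ : EuclideanSpace ℝ (Fin n) → ℝ}
    (hφ : Measurable φ) (hφ01 : ∀ x, φ x ∈ Set.Icc (0 : ℝ) 1) :
    Integrable (fun x => φ x • x) μ :=
  hμ.bdd_smul 1 hφ.aestronglyMeasurable (ae_of_all _ fun x => by
    rw [Real.norm_of_nonneg (hφ01 x).1]
    exact (hφ01 x).2)

lemma convex_zonoid (hμ : Integrable (fun x => x) μ) : Convex ℝ (zonoid μ) := by
  rintro _ ⟨φ, hφ, hφ01, rfl⟩ _ ⟨ψ, hψ, hψ01, rfl⟩ a b ha hb hab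
  refine ⟨fun x => a * φ x + b * ψ x, by fun_prop, fun x => ⟨?_, ?_⟩, ?_⟩
  · exact add_nonneg (mul_nonneg ha (hφ01 x).1) (mul_nonneg hb (hψ01 x).1)
  · show a * φ x + b * ψ x ≤ 1
    nlinarith [mul_le_mul_of_nonneg_left (hφ01 x).2 ha, mul_le_mul_of_nonneg_left (hψ01 x).2 hb]
  · have hφa : Integrable (fun x => a • (φ x • x)) μ := (integrable_smul_self hμ hφ hφ01).smul a
    have hψb : Integrable (fun x => b • (ψ x • x)) μ := (integrable_smul_self hμ hψ hψ01).smul b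
    simp_rw [add_smul, mul_smul]
    rw [integral_add hφa hψb, integral_smul, integral_smul]

lemma isGreatest_inner_zonoid (hμ : Integrable (fun x => x) μ) (u : EuclideanSpace ℝ (Fin n)) :
    IsGreatest ((⟪u, ·⟫_ℝ) '' zonoid μ) (zonoidSupport μ u) := by
  constructor
  · let S := {x : EuclideanSpace ℝ (Fin n) | 0 < ⟪u, x⟫_ℝ}
    have hS : MeasurableSet S := measurableSet_lt measurable_const (by fun_prop)
    have hφ01 : ∀ x, S.indicator (fun _ => (1 : ℝ)) x ∈ Set.Icc (0 : ℝ) 1 := fun x => by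
      by_cases hx : x ∈ S <;> simp [hx]
    have hφ : Measurable (S.indicator fun _ => (1 : ℝ)) := measurable_const.indicator hS
    refine ⟨_, ⟨_, hφ, hφ01, rfl⟩, ?_⟩
    dsimp only
    rw [zonoidSupport, ← integral_inner (integrable_smul_self hμ hφ hφ01)]
    refine integral_congr_ae (ae_of_all _ fun x => ?_)
    by_cases hx : 0 < ⟪u, x⟫_ℝ
    · simp [S, hx, hx.le]
    · simp [S, hx, not_lt.1 hx]
  · rintro _ ⟨_, ⟨φ, hφ, hφ01, rfl⟩, rfl⟩
    dsimp only
    rw [← integral_inner (integrable_smul_self hμ hφ hφ01)]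
    refine integral_mono ((integrable_smul_self hμ hφ hφ01).const_inner u)
      (integrable_max_inner_zero hμ u) fun x => ?_
    rw [real_inner_smul_right]
    rcases le_total ⟪u, x⟫_ℝ 0 with hux | hux
    · exact (mul_nonpos_of_nonneg_of_nonpos (hφ01 x).1 hux).trans (le_max_right _ _)
    · exact (mul_le_of_le_one_left hux (hφ01 x).2).trans (le_max_left _ _)

lemma lipschitzWith_zonoidSupport (hμ : Integrable (fun x => x) μ) {K : ℝ≥0}
    (hK : ∫ x, ‖x‖ ∂μ ≤ K) : LipschitzWith K (zonoidSupport μ) := by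
  refine LipschitzWith.of_dist_le_mul fun u v => ?_
  rw [dist_eq_norm, zonoidSupport, zonoidSupport,
    ← integral_sub (integrable_max_inner_zero hμ u) (integrable_max_inner_zero hμ v)]
  calc ‖∫ x, (max ⟪u, x⟫_ℝ 0 - max ⟪v, x⟫_ℝ 0) ∂μ‖
      ≤ ∫ x, dist u v * ‖x‖ ∂μ := by
        refine norm_integral_le_of_norm_le (hμ.norm.const_mul _) (ae_of_all _ fun x => ?_)
        calc ‖max ⟪u, x⟫_ℝ 0 - max ⟪v, x⟫_ℝ 0‖ ≤ |⟪u, x⟫_ℝ - ⟪v, x⟫_ℝ| :=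
              abs_max_sub_max_le_abs _ _ _
          _ = |⟪u - v, x⟫_ℝ| := by rw [inner_sub_left]
          _ ≤ dist u v * ‖x‖ := dist_eq_norm u v ▸ abs_real_inner_le_norm _ _
    _ ≤ K * dist u v := by
        rw [integral_const_mul, mul_comm]
        gcongr

end Zonoid

theorem zonoid_continuity_general {n : ℕ} (μk : ℕ → Measure (EuclideanSpace ℝ (Fin n)))
    (μ : Measure (EuclideanSpace ℝ (Fin n)))
    (hint : ∀ k, Integrable (fun x => x) (μk k)) (hμ : Integrable (fun x => x) μ)
    (hui : ∀ ε > (0 : ℝ), ∃ β : ℝ, ∀ k,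
      ∫ x in {x : EuclideanSpace ℝ (Fin n) | β ≤ ‖x‖}, ‖x‖ ∂(μk k) < ε)
    (hweak : ∀ f : BoundedContinuousFunction (EuclideanSpace ℝ (Fin n)) ℝ,
      Tendsto (fun k => ∫ x, f x ∂(μk k)) atTop (𝓝 (∫ x, f x ∂μ))) :
    Tendsto (fun k => Metric.hausdorffDist (zonoid (μk k)) (zonoid μ)) atTop (𝓝 0) := by
  have hconv {g : EuclideanSpace ℝ (Fin n) → ℝ} (hg : Continuous g) (hg0 : ∀ x, 0 ≤ g x)
      (hg_le : ∀ x, g x ≤ ‖x‖) :=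
    tendsto_integral_of_weakConvergence_of_uniformIntegrable
      (fun k => (hint k).norm) hμ.norm hui hweak hg hg0 hg_le
  obtain ⟨K, hK⟩ := (hconv continuous_norm norm_nonneg fun _ => le_rfl).bddAbove_range
  have hsphere : ∀ u ∈ Metric.sphere (0 : EuclideanSpace ℝ (Fin n)) 1, ∀ x,
      max ⟪u, x⟫_ℝ 0 ≤ ‖x‖ := fun u hu x =>
    max_le ((real_inner_le_norm u x).trans_eq (by rw [mem_sphere_zero_iff_norm.1 hu, one_mul]))
      (norm_nonneg x)
  have hunif : TendstoUniformlyOn (fun k => zonoidSupport (μk k)) (zonoidSupport μ) atTop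
      (Metric.sphere 0 1) :=
    tendstoUniformlyOn_of_lipschitzWith (isCompact_sphere 0 1)
      (fun k => lipschitzWith_zonoidSupport (hint k) ((hK ⟨k, rfl⟩).trans K.le_coe_toNNReal))
      fun u hu => hconv (by fun_prop) (fun x => le_max_right _ _) (hsphere u hu)
  refine NormedAddGroup.tendsto_nhds_zero.2 fun ε hε => ?_
  filter_upwards [Metric.tendstoUniformlyOn_iff.1 hunif (ε / 2) (half_pos hε)] with k hk
  rw [Real.norm_of_nonneg Metric.hausdorffDist_nonneg]
  refine lt_of_le_of_lt ?_ (half_lt_self hε)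
  refine hausdorffDist_le_of_isGreatest_inner (convex_zonoid (hint k)) (convex_zonoid hμ)
    (isGreatest_inner_zonoid (hint k)) (isGreatest_inner_zonoid hμ) (half_pos hε).le
    fun u hu => ?_
  rw [dist_comm]
  exact (hk u (mem_sphere_zero_iff_norm.2 hu)).le

theorem zonoid_continuity {n : ℕ} (μk : ℕ → Measure (EuclideanSpace ℝ (Fin n)))
    (μ : Measure (EuclideanSpace ℝ (Fin n)))
    [∀ k, IsFiniteMeasure (μk k)] [IsFiniteMeasure μ]
    (hint : ∀ k, Integrable (fun x => x) (μk k)) (hμ : Integrable (fun x => x) μ)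
    (hui : ∀ ε > (0 : ℝ), ∃ β : ℝ, ∀ k,
      ∫ x in {x : EuclideanSpace ℝ (Fin n) | β ≤ ‖x‖}, ‖x‖ ∂(μk k) < ε)
    (hweak : ∀ f : BoundedContinuousFunction (EuclideanSpace ℝ (Fin n)) ℝ,
      Tendsto (fun k => ∫ x, f x ∂(μk k)) atTop (𝓝 (∫ x, f x ∂μ))) :
    Tendsto (fun k => Metric.hausdorffDist (zonoid (μk k)) (zonoid μ)) atTop (𝓝 0) :=
  zonoid_continuity_general μk μ hint hμ hui hweak
end

section
/- For every non-empty compact set K ⊆ ℝⁿ, the zonoid map Φ : 𝒫(K) → 𝒵ⁿ, μ ↦ Z(μ), is continuous, where 𝒫(K) carries the topology of weak convergence and 𝒵ⁿ the topology induced by the Hausdorff metric. -/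
open MeasureTheory Pointwise Filter Topology

/-!
The support function of `zonoid ν` is `u ↦ ∫ max ⟪u, x⟫ 0 dν`, and the Hausdorff distance of two
convex sets is at most the uniform distance of their support functions on the unit sphere. When all
measures live on a compact `K ⊆ closedBall 0 R`, every support function is `R`-Lipschitz, and
weak convergence gives pointwise convergence of support functions because the integrand is
continuous and bounded on `K`. Equicontinuity upgrades this to uniform convergence on the compact
unit sphere.
-/

open Metric Set
open scoped NNReal RealInnerProductSpace

theorem Equicontinuous.tendstoUniformlyOn_of_tendsto {ι X α : Type*} [TopologicalSpace X]
    [UniformSpace α] {F : ι → X → α} {f : X → α} {l : Filter ι} (hF : Equicontinuous F)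
    (hFf : ∀ x, Tendsto (F · x) l (𝓝 (f x))) {K : Set X} (hK : IsCompact K) :
    TendstoUniformlyOn F f l K := by
  have hsingle : ∀ s ∈ ({K} : Set (Set X)), IsCompact s := by simpa using hK
  have h := (EquicontinuousOn.tendsto_uniformOnFun_iff_pi' hsingle
    (fun s _ => hF.equicontinuousOn s) l f).2 (tendsto_pi_nhds.2 fun x => hFf x)
  exact UniformOnFun.tendsto_iff_tendstoUniformlyOn.1 h K rfl

theorem MeasureTheory.ProbabilityMeasure.tendsto_integral_of_isCompact {X ι : Type*}
    [TopologicalSpace X] [MeasurableSpace X] [OpensMeasurableSpace X] {l : Filter ι} {K : Set X}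
    (hK : IsCompact K) {μs : ι → ProbabilityMeasure X} {μ : ProbabilityMeasure X}
    (hμs : ∀ i, (μs i : Measure X) Kᶜ = 0) (hμ : (μ : Measure X) Kᶜ = 0)
    (hlim : Tendsto μs l (𝓝 μ)) {f : X → ℝ} (hf : Continuous f) :
    Tendsto (fun i => ∫ x, f x ∂(μs i : Measure X)) l (𝓝 (∫ x, f x ∂(μ : Measure X))) := by
  obtain ⟨M, hM⟩ := hK.exists_bound_of_continuousOn hf.continuousOn
  let g : BoundedContinuousFunction X ℝ :=
    .ofNormedAddCommGroup (fun x => max (-|M|) (min (f x) |M|)) (by fun_prop) |M| fun x => by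
      rw [Real.norm_eq_abs, abs_le]
      constructor <;> simp
  have hgf : ∀ ν : Measure X, ν Kᶜ = 0 → ∫ x, g x ∂ν = ∫ x, f x ∂ν := fun ν hν => by
    refine integral_congr_ae ?_
    filter_upwards [mem_ae_iff.2 hν] with x hx
    have := abs_le.1 ((hM x hx).trans (le_abs_self M))
    show max _ (min _ _) = _
    rw [min_eq_left this.2, max_eq_right this.1]
  simpa only [hgf _ (hμs _), hgf _ hμ] using
    ProbabilityMeasure.tendsto_iff_forall_integral_tendsto.1 hlim g

theorem Convex.infDist_le_of_forall_exists_inner_le {E : Type*} [NormedAddCommGroup E]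
    [InnerProductSpace ℝ E] [CompleteSpace E] {B : Set E} (hB : Convex ℝ B) (hne : B.Nonempty)
    {z : E} {ε : ℝ} (hε : 0 ≤ ε) (h : ∀ u : E, ‖u‖ = 1 → ∃ w ∈ B, ⟪u, z - w⟫ ≤ ε) :
    infDist z B ≤ ε := by
  obtain ⟨p, hp, hproj⟩ := exists_norm_eq_iInf_of_complete_convex hne.closure
    isClosed_closure.isComplete hB.closure z
  have hobtuse := (norm_eq_iInf_iff_real_inner_le_zero hB.closure hp).1 hproj
  have hdist : infDist z B ≤ ‖z - p‖ := by
    rw [← infDist_closure, ← dist_eq_norm]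
    exact infDist_le_dist_of_mem hp
  refine hdist.trans ?_
  rcases eq_or_ne (z - p) 0 with hzp | hzp
  · simpa [hzp] using hε
  -- separate `z` from `closure B` along the unit normal `u` through the projection `p`
  set u := ‖z - p‖⁻¹ • (z - p)
  have hu : ‖u‖ = 1 := norm_smul_inv_norm hzp
  obtain ⟨w, hw, hzw⟩ := h u hu
  have hwp : ⟪u, w - p⟫ ≤ 0 := by
    rw [real_inner_smul_left]
    exact mul_nonpos_of_nonneg_of_nonpos (by positivity) (hobtuse w (subset_closure hw))
  calc ‖z - p‖ = ⟪u, z - p⟫ := by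
        rw [real_inner_smul_left, real_inner_self_eq_norm_sq, sq,
          inv_mul_cancel_left₀ (norm_ne_zero_iff.2 hzp)]
    _ = ⟪u, z - w⟫ + ⟪u, w - p⟫ := by rw [← inner_add_right, sub_add_sub_cancel]
    _ ≤ ε := by linarith

theorem integrable_smul_self_of_mem_Icc {E : Type*} [NormedAddCommGroup E] [NormedSpace ℝ E]
    [MeasurableSpace E] {ν : Measure E} (hν : Integrable id ν) {φ : E → ℝ}
    (hφ : Measurable φ) (h01 : ∀ x, φ x ∈ Icc (0 : ℝ) 1) : Integrable (fun x => φ x • x) ν :=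
  hν.bdd_smul 1 hφ.aestronglyMeasurable (.of_forall fun x => by
    rw [Real.norm_eq_abs, abs_of_nonneg (h01 x).1]; exact (h01 x).2)

section SupportFunction

variable {E : Type*} [NormedAddCommGroup E] [InnerProductSpace ℝ E] [MeasurableSpace E]

/-- The support function `u ↦ sup_{z ∈ zonoid ν} ⟪u, z⟫`, attained at `φ = 1_{0 < ⟪u, ·⟫}`. -/
noncomputable def zonoidSupportFun (ν : Measure E) (u : E) : ℝ :=
  ∫ x, max ⟪u, x⟫ 0 ∂ν

theorem lipschitzWith_zonoidSupportFun {ν : Measure E} (hν : Integrable id ν) {R : ℝ≥0}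
    (hR : ∫ x, ‖x‖ ∂ν ≤ R) : LipschitzWith R (zonoidSupportFun ν) := by
  refine LipschitzWith.of_dist_le_mul fun u v => ?_
  have hpos : ∀ w : E, Integrable (fun x => max ⟪w, x⟫ 0) ν := fun w =>
    (hν.const_inner w).pos_part
  rw [Real.dist_eq, zonoidSupportFun, zonoidSupportFun, ← integral_sub (hpos u) (hpos v),
    dist_eq_norm]
  calc |∫ x, (max ⟪u, x⟫ 0 - max ⟪v, x⟫ 0) ∂ν|
      ≤ ∫ x, ‖u - v‖ * ‖x‖ ∂ν := by
        refine abs_integral_le_integral_abs.trans (integral_mono ((hpos u).sub (hpos v)).abs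
          (hν.norm.const_mul _) fun x => ?_)
        calc |max ⟪u, x⟫ 0 - max ⟪v, x⟫ 0| ≤ |⟪u, x⟫ - ⟪v, x⟫| := abs_max_sub_max_le_abs _ _ _
          _ ≤ ‖u - v‖ * ‖x‖ := by rw [← inner_sub_left]; exact abs_real_inner_le_norm _ _
    _ = ‖u - v‖ * ∫ x, ‖x‖ ∂ν := integral_const_mul _ _
    _ ≤ R * ‖u - v‖ := by rw [mul_comm]; exact mul_le_mul_of_nonneg_right hR (norm_nonneg _)

theorem lipschitzWith_zonoidSupportFun_of_ae_norm_le {ν : Measure E} [IsProbabilityMeasure ν]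
    (hν : Integrable id ν) {R : ℝ≥0} (hR : ∀ᵐ x ∂ν, ‖x‖ ≤ R) :
    LipschitzWith R (zonoidSupportFun ν) :=
  lipschitzWith_zonoidSupportFun hν <| calc
    ∫ x, ‖x‖ ∂ν ≤ ∫ _, (R : ℝ) ∂ν :=
      integral_mono_of_nonneg (.of_forall fun _ => norm_nonneg _) (integrable_const _) hR
    _ = R := by simp

end SupportFunction

section Zonoid

variable {n : ℕ} {ν ν' : Measure (EuclideanSpace ℝ (Fin n))}

theorem zero_mem_zonoid (ν : Measure (EuclideanSpace ℝ (Fin n))) : 0 ∈ zonoid ν :=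
  ⟨0, measurable_const, fun _ => ⟨le_rfl, zero_le_one⟩, by simp⟩

theorem convex_zonoid_s7 (hν : Integrable id ν) : Convex ℝ (zonoid ν) := by
  rintro _ ⟨φ, hφ, h01, rfl⟩ _ ⟨ψ, hψ, h01', rfl⟩ a b ha hb hab
  refine ⟨fun x => a * φ x + b * ψ x, by fun_prop, fun x => ⟨?_, ?_⟩, ?_⟩
  · have := (h01 x).1; have := (h01' x).1; positivity
  · have := (h01 x).2; have := (h01' x).2; nlinarith
  · simp only [add_smul, mul_smul]
    rw [integral_add, integral_smul, integral_smul]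
    · exact (integrable_smul_self_of_mem_Icc hν hφ h01).smul a
    · exact (integrable_smul_self_of_mem_Icc hν hψ h01').smul b

theorem inner_le_zonoidSupportFun (hν : Integrable id ν) {z : EuclideanSpace ℝ (Fin n)}
    (hz : z ∈ zonoid ν) (u : EuclideanSpace ℝ (Fin n)) : ⟪u, z⟫ ≤ zonoidSupportFun ν u := by
  obtain ⟨φ, hφ, h01, rfl⟩ := hz
  have hint := integrable_smul_self_of_mem_Icc hν hφ h01
  rw [← integral_inner hint]
  refine integral_mono (hint.const_inner u) (hν.const_inner u).pos_part fun x => ?_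
  rw [real_inner_smul_right]
  have := h01 x
  rcases le_total ⟪u, x⟫ 0 with h | h
  · exact (mul_nonpos_of_nonneg_of_nonpos this.1 h).trans (le_max_right _ _)
  · exact (mul_le_of_le_one_left h this.2).trans (le_max_left _ _)

theorem exists_mem_zonoid_inner_eq (hν : Integrable id ν) (u : EuclideanSpace ℝ (Fin n)) :
    ∃ w ∈ zonoid ν, ⟪u, w⟫ = zonoidSupportFun ν u := by
  set H := {x : EuclideanSpace ℝ (Fin n) | 0 < ⟪u, x⟫}
  have hH : MeasurableSet H := measurableSet_lt measurable_const (by fun_prop)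
  have h01 : ∀ x, H.indicator 1 x ∈ Icc (0 : ℝ) 1 := fun x => by
    by_cases hx : x ∈ H <;> simp [hx]
  refine ⟨_, ⟨H.indicator 1, measurable_one.indicator hH, h01, rfl⟩, ?_⟩
  rw [← integral_inner (integrable_smul_self_of_mem_Icc hν (measurable_one.indicator hH) h01)]
  refine integral_congr_ae (.of_forall fun x => ?_)
  by_cases hx : x ∈ H
  · simp [hx, le_of_lt (show 0 < ⟪u, x⟫ from hx)]
  · simp [hx, not_lt.1 (show ¬0 < ⟪u, x⟫ from hx)]

theorem infDist_zonoid_le (hν : Integrable id ν) (hν' : Integrable id ν') {ε : ℝ} (hε : 0 ≤ ε)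
    (h : ∀ u, ‖u‖ = 1 → zonoidSupportFun ν u ≤ zonoidSupportFun ν' u + ε)
    {z : EuclideanSpace ℝ (Fin n)} (hz : z ∈ zonoid ν) : infDist z (zonoid ν') ≤ ε := by
  refine (convex_zonoid_s7 hν').infDist_le_of_forall_exists_inner_le ⟨0, zero_mem_zonoid ν'⟩ hε
    fun u hu => ?_
  obtain ⟨w, hw, hwu⟩ := exists_mem_zonoid_inner_eq hν' u
  refine ⟨w, hw, ?_⟩
  rw [inner_sub_right, hwu]
  linarith [inner_le_zonoidSupportFun hν hz u, h u hu]

theorem hausdorffDist_zonoid_le (hν : Integrable id ν) (hν' : Integrable id ν') {ε : ℝ}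
    (hε : 0 ≤ ε) (h : ∀ u, ‖u‖ = 1 → dist (zonoidSupportFun ν u) (zonoidSupportFun ν' u) ≤ ε) :
    hausdorffDist (zonoid ν) (zonoid ν') ≤ ε := by
  have h' := fun u hu => abs_le.1 (Real.dist_eq _ _ ▸ h u hu)
  exact hausdorffDist_le_of_infDist hε
    (fun z => infDist_zonoid_le hν hν' hε fun u hu => by linarith [h' u hu])
    (fun z => infDist_zonoid_le hν' hν hε fun u hu => by linarith [h' u hu])

end Zonoid

theorem zonoid_map_continuous_on_compact_general {n : ℕ} (K : Set (EuclideanSpace ℝ (Fin n)))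
    (hK : IsCompact K)
    (μk : ℕ → ProbabilityMeasure (EuclideanSpace ℝ (Fin n)))
    (μ : ProbabilityMeasure (EuclideanSpace ℝ (Fin n)))
    (hsupp : ∀ k, (μk k : Measure (EuclideanSpace ℝ (Fin n))) Kᶜ = 0)
    (hsuppμ : (μ : Measure (EuclideanSpace ℝ (Fin n))) Kᶜ = 0)
    (hconv : Tendsto μk atTop (𝓝 μ)) :
    Tendsto (fun k => Metric.hausdorffDist
      (zonoid (μk k : Measure (EuclideanSpace ℝ (Fin n))))
      (zonoid (μ : Measure (EuclideanSpace ℝ (Fin n))))) atTop (𝓝 0) := by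
  obtain ⟨R, hR⟩ : ∃ R : ℝ≥0, ∀ x ∈ K, ‖x‖ ≤ R :=
    let ⟨C, hC⟩ := hK.isBounded.exists_norm_le
    ⟨C.toNNReal, fun x hx => (hC x hx).trans (Real.le_coe_toNNReal C)⟩
  have hbound (ν : Measure (EuclideanSpace ℝ (Fin n))) (hν : ν Kᶜ = 0) : ∀ᵐ x ∂ν, ‖x‖ ≤ R :=
    Eventually.mono (mem_ae_iff.2 hν) hR
  have hint (ν : ProbabilityMeasure (EuclideanSpace ℝ (Fin n)))
      (hν : (ν : Measure (EuclideanSpace ℝ (Fin n))) Kᶜ = 0) :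
      Integrable id (ν : Measure (EuclideanSpace ℝ (Fin n))) :=
    .of_bound aestronglyMeasurable_id _ (hbound _ hν)
  have hlip (k : ℕ) :
      LipschitzWith R (zonoidSupportFun (μk k : Measure (EuclideanSpace ℝ (Fin n)))) :=
    lipschitzWith_zonoidSupportFun_of_ae_norm_le (hint _ (hsupp k)) (hbound _ (hsupp k))
  have hunif : TendstoUniformlyOn
      (fun k => zonoidSupportFun (μk k : Measure (EuclideanSpace ℝ (Fin n))))
      (zonoidSupportFun (μ : Measure (EuclideanSpace ℝ (Fin n)))) atTop (sphere 0 1) :=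
    (LipschitzWith.uniformEquicontinuous _ R hlip).equicontinuous.tendstoUniformlyOn_of_tendsto
      (fun u => ProbabilityMeasure.tendsto_integral_of_isCompact hK hsupp hsuppμ hconv
        (by fun_prop)) (isCompact_sphere 0 1)
  refine Metric.tendsto_nhds.2 fun ε hε => ?_
  filter_upwards [Metric.tendstoUniformlyOn_iff.1 hunif (ε / 2) (half_pos hε)] with k hk
  rw [Real.dist_0_eq_abs, abs_of_nonneg hausdorffDist_nonneg]
  calc hausdorffDist (zonoid (μk k : Measure (EuclideanSpace ℝ (Fin n))))
        (zonoid (μ : Measure (EuclideanSpace ℝ (Fin n)))) ≤ ε / 2 :=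
        hausdorffDist_zonoid_le (hint _ (hsupp k)) (hint _ hsuppμ) (half_pos hε).le
          fun u hu => (dist_comm _ _).trans_le (hk u (mem_sphere_zero_iff_norm.2 hu)).le
    _ < ε := half_lt_self hε

theorem zonoid_map_continuous_on_compact {n : ℕ} (K : Set (EuclideanSpace ℝ (Fin n)))
    (hK : IsCompact K) (hKne : K.Nonempty)
    (μk : ℕ → ProbabilityMeasure (EuclideanSpace ℝ (Fin n)))
    (μ : ProbabilityMeasure (EuclideanSpace ℝ (Fin n)))
    (hsupp : ∀ k, (μk k : Measure (EuclideanSpace ℝ (Fin n))) Kᶜ = 0)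
    (hsuppμ : (μ : Measure (EuclideanSpace ℝ (Fin n))) Kᶜ = 0)
    (hconv : Tendsto μk atTop (𝓝 μ)) :
    Tendsto (fun k => Metric.hausdorffDist
      (zonoid (μk k : Measure (EuclideanSpace ℝ (Fin n))))
      (zonoid (μ : Measure (EuclideanSpace ℝ (Fin n))))) atTop (𝓝 0) :=
  zonoid_map_continuous_on_compact_general K hK μk μ hsupp hsuppμ hconv
end

section
/- Let (E,d) be a separable metric space and X₁, X₂, … independent E-valued random variables with common distribution μ. Then the empirical measures μ̂_N = (1/N) Σ_{i=1}^N δ_{X_i} converge weakly to μ as N → ∞ with probability 1. -/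
open MeasureTheory Filter Topology ProbabilityTheory TopologicalSpace Set
open scoped ENNReal NNReal BoundedContinuousFunction

/-!
The strong law of large numbers, applied to indicator functions, shows that almost surely the
empirical frequencies of all sets of a fixed countable family converge to their `μ`-measures.
A separable metric space is second countable, so it has a countable basis of open sets closed
under finite intersections; convergence of the empirical measures on such a π-system already
forces weak convergence (portmanteau theorem: every open set is approximated from inside by finite
unions of basic sets, whose measures are handled by inclusion–exclusion).
-/

theorem ProbabilityTheory.strong_law_ae_comp
    {E : Type*} [MeasurableSpace E] {Ω : Type*} [MeasureSpace Ω]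
    [IsProbabilityMeasure (ℙ : Measure Ω)]
    {F : Type*} [NormedAddCommGroup F] [NormedSpace ℝ F] [CompleteSpace F]
    [MeasurableSpace F] [BorelSpace F]
    (X : ℕ → Ω → E) (hXm : ∀ i, Measurable (X i)) (hindep : iIndepFun X ℙ)
    (μ : Measure E) (hdist : ∀ i, Measure.map (X i) ℙ = μ)
    {g : E → F} (hgm : Measurable g) (hgi : Integrable g μ) :
    ∀ᵐ ω ∂(ℙ : Measure Ω),
      Tendsto (fun N : ℕ => (N : ℝ)⁻¹ • ∑ i ∈ Finset.range N, g (X i ω)) atTop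
        (𝓝 (∫ x, g x ∂μ)) := by
  have hident : ∀ i, IdentDistrib (g ∘ X i) (g ∘ X 0) ℙ ℙ := fun i =>
    (IdentDistrib.mk (hXm i).aemeasurable (hXm 0).aemeasurable (by rw [hdist, hdist])).comp hgm
  have hint : Integrable (g ∘ X 0) ℙ := (hdist 0 ▸ hgi).comp_measurable (hXm 0)
  have hmean : ∫ ω, g (X 0 ω) = ∫ x, g x ∂μ := by
    rw [← hdist 0, integral_map (hXm 0).aemeasurable (hdist 0 ▸ hgi.aestronglyMeasurable)]
  simpa only [Function.comp_apply, hmean] using strong_law_ae (fun i => g ∘ X i) hint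
    (fun i j hij => (hindep.indepFun hij).comp hgm hgm) hident

theorem TopologicalSpace.exists_countable_isPiSystem_isTopologicalBasis
    (α : Type*) [TopologicalSpace α] [SecondCountableTopology α] :
    ∃ S : Set (Set α), S.Countable ∧ IsPiSystem S ∧ IsTopologicalBasis S := by
  obtain ⟨B, hBc, -, hB⟩ := exists_countable_basis α
  refine ⟨(fun f => ⋂₀ f) '' {f | f.Finite ∧ f ⊆ B},
    (countable_ofPred_finite_subset hBc).image _, ?_,
    isTopologicalBasis_of_subbasis hB.eq_generateFrom⟩
  rintro _ ⟨f, ⟨hf, hfB⟩, rfl⟩ _ ⟨g, ⟨hg, hgB⟩, rfl⟩ -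
  exact ⟨f ∪ g, ⟨hf.union hg, union_subset hfB hgB⟩, sInter_union f g⟩

section Empirical

variable {E : Type*} [MeasurableSpace E]

noncomputable def empiricalMeasure (x : ℕ → E) (N : ℕ) : Measure E :=
  (N : ℝ≥0∞)⁻¹ • ∑ i ∈ Finset.range N, Measure.dirac (x i)

theorem isProbabilityMeasure_empiricalMeasure (x : ℕ → E) {N : ℕ} (hN : N ≠ 0) :
    IsProbabilityMeasure (empiricalMeasure x N) := by
  constructor
  simp [empiricalMeasure, ENNReal.inv_mul_cancel, hN]

theorem integral_empiricalMeasure (x : ℕ → E) (N : ℕ) {f : E → ℝ}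
    (hf : StronglyMeasurable f) :
    ∫ y, f y ∂empiricalMeasure x N = (N : ℝ)⁻¹ * ∑ i ∈ Finset.range N, f (x i) := by
  rw [empiricalMeasure, integral_smul_measure,
    integral_finsetSum_measure fun i _ => integrable_dirac' hf enorm_lt_top]
  simp [integral_dirac' _ _ hf]

theorem measureReal_empiricalMeasure (x : ℕ → E) (N : ℕ) {s : Set E} (hs : MeasurableSet s) :
    (empiricalMeasure x N).real s =
      (N : ℝ)⁻¹ * ∑ i ∈ Finset.range N, s.indicator 1 (x i) := by
  rw [← integral_empiricalMeasure x N (measurable_one.indicator hs).stronglyMeasurable]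
  exact (integral_indicator_one hs).symm

theorem tendsto_integral_empiricalMeasure_of_isPiSystem
    [TopologicalSpace E] [SecondCountableTopology E] [OpensMeasurableSpace E]
    {S : Set (Set E)} (hSpi : IsPiSystem S) (hSb : IsTopologicalBasis S)
    (μ : Measure E) [IsProbabilityMeasure μ] (x : ℕ → E)
    (h : ∀ s ∈ S, Tendsto (fun N => (empiricalMeasure x N).real s) atTop (𝓝 (μ.real s)))
    (f : E →ᵇ ℝ) :
    Tendsto (fun N => ∫ y, f y ∂empiricalMeasure x N) atTop (𝓝 (∫ y, f y ∂μ)) := by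
  -- `empiricalMeasure x 0 = 0` is not a probability measure, hence the shift by one.
  let ν : ℕ → ProbabilityMeasure E := fun n =>
    ⟨empiricalMeasure x (n + 1), isProbabilityMeasure_empiricalMeasure x n.succ_ne_zero⟩
  have hν : Tendsto ν atTop (𝓝 ⟨μ, ‹_›⟩) := by
    refine hSpi.tendsto_probabilityMeasure_of_tendsto_of_mem
      (fun s hs => (hSb.isOpen hs).measurableSet) (fun u hu y hy => ?_) (fun s hs => ?_)
    · obtain ⟨s, hsS, hys, hsu⟩ := hSb.exists_subset_of_mem_open hy hu
      exact ⟨s, hsS, (hSb.isOpen hsS).mem_nhds hys, hsu⟩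
    · simp only [← NNReal.tendsto_coe, ← ProbabilityMeasure.measureReal_eq_coe_coeFn]
      exact (tendsto_add_atTop_iff_nat 1).2 (h s hs)
  rw [← tendsto_add_atTop_iff_nat 1]
  exact ProbabilityMeasure.tendsto_iff_forall_integral_tendsto.1 hν f

end Empirical

theorem glivenko_cantelli_varadarajan
    {E : Type*} [MetricSpace E] [TopologicalSpace.SeparableSpace E]
    [MeasurableSpace E] [BorelSpace E]
    {Ω : Type*} [MeasureSpace Ω] [IsProbabilityMeasure (ℙ : Measure Ω)]
    (X : ℕ → Ω → E) (hXm : ∀ i, Measurable (X i))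
    (hindep : iIndepFun X ℙ)
    (μ : Measure E) [IsProbabilityMeasure μ]
    (hdist : ∀ i, Measure.map (X i) ℙ = μ) :
    ∀ᵐ ω ∂(ℙ : Measure Ω), ∀ f : BoundedContinuousFunction E ℝ,
      Tendsto (fun N : ℕ => (N : ℝ)⁻¹ * ∑ i ∈ Finset.range N, f (X i ω)) atTop
        (𝓝 (∫ x, f x ∂μ)) := by
  have : SecondCountableTopology E := UniformSpace.secondCountable_of_separable E
  obtain ⟨S, hSc, hSpi, hSb⟩ := exists_countable_isPiSystem_isTopologicalBasis E
  have hfreq : ∀ᵐ ω ∂(ℙ : Measure Ω), ∀ s ∈ S, Tendsto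
      (fun N => (empiricalMeasure (X · ω) N).real s) atTop (𝓝 (μ.real s)) := by
    refine (ae_ball_iff hSc).2 fun s hs => ?_
    have hsm := (hSb.isOpen hs).measurableSet
    have hind : Measurable (s.indicator (1 : E → ℝ)) := measurable_one.indicator hsm
    filter_upwards [strong_law_ae_comp X hXm hindep μ hdist hind
      ((integrable_const 1).indicator hsm)] with ω hω
    simpa [measureReal_empiricalMeasure _ _ hsm, integral_indicator_one hsm] using hω
  filter_upwards [hfreq] with ω hω f
  simpa only [integral_empiricalMeasure _ _ f.continuous.stronglyMeasurable] using
    tendsto_integral_empiricalMeasure_of_isPiSystem hSpi hSb μ _ hω f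
end
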